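/- (Hyperbolic rotation of points.) Let u, v, p ∈ EuclideanSpace ℝ (Fin 3) with ⟨u,v⟩ = 0 and ‖u‖ = ‖v‖ = 1. Define H₁ := (1/2)•( (E(u)−E*(u))∘(E(v)+E*(v)) − (E(v)+E*(v))∘(E(u)−E*(u)) ) and H₂ := (1/2)•( (E(u)+E*(u))∘(E(v)−E*(v)) − (E(v)−E*(v))∘(E(u)+E*(u)) ). For θ ∈ ℝ set Ψ := (cosh(θ/2)•id + sinh(θ/2)•H₁) ∘ (cosh(θ/2)•id − sinh(θ/2)•H₂) and Ψ' := (cosh(θ/2)•id − sinh(θ/2)•H₁) ∘ (cosh(θ/2)•id + sinh(θ/2)•H₂). Writing p_u := ⟨p,u⟩, p_v := ⟨p,v⟩ and p⊥ := p − p_u•u − p_v•v, we have Ψ ∘ E(p) ∘ Ψ' = E( p⊥ + (cosh θ · p_u + sinh θ · p_v)•u + (cosh θ · p_v + sinh θ · p_u)•v ). (Since H₁² = H₂² = id and H₁, H₂ commute when ⟨u,v⟩ = 0, Ψ = e^{θS/2} with S = [u,v*] + [v,u*] and Ψ' = Ψ~, so this is the paper's hyperbolic rotation by angle θ in the plane of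 u and v.) -/
import Mathlib


open scoped RealInnerProductSpace

noncomputable section

/-- Left exterior multiplication by a vector on the exterior algebra of `ℝ³`. -/
def wedgeOp (v : EuclideanSpace ℝ (Fin 3)) :
    ExteriorAlgebra ℝ (EuclideanSpace ℝ (Fin 3)) →ₗ[ℝ]
      ExteriorAlgebra ℝ (EuclideanSpace ℝ (Fin 3)) :=
  LinearMap.mulLeft ℝ (ExteriorAlgebra.ι ℝ v)

/-- Left contraction (interior product) along the functional `⟪v, ·⟫`. -/
def contrOp (v : EuclideanSpace ℝ (Fin 3)) :
    ExteriorAlgebra ℝ (EuclideanSpace ℝ (Fin 3)) →ₗ[ℝ]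
      ExteriorAlgebra ℝ (EuclideanSpace ℝ (Fin 3)) :=
  CliffordAlgebra.contractLeft (innerₗ (EuclideanSpace ℝ (Fin 3)) v)

/-- The operator `H₁ = (1/2)[E(u)−E*(u), E(v)+E*(v)]`. -/
def hypGen1 (u v : EuclideanSpace ℝ (Fin 3)) :
    ExteriorAlgebra ℝ (EuclideanSpace ℝ (Fin 3)) →ₗ[ℝ]
      ExteriorAlgebra ℝ (EuclideanSpace ℝ (Fin 3)) :=
  (1 / 2 : ℝ) • ((wedgeOp u - contrOp u) ∘ₗ (wedgeOp v + contrOp v)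
    - (wedgeOp v + contrOp v) ∘ₗ (wedgeOp u - contrOp u))

/-- The operator `H₂ = (1/2)[E(u)+E*(u), E(v)−E*(v)]`. -/
def hypGen2 (u v : EuclideanSpace ℝ (Fin 3)) :
    ExteriorAlgebra ℝ (EuclideanSpace ℝ (Fin 3)) →ₗ[ℝ]
      ExteriorAlgebra ℝ (EuclideanSpace ℝ (Fin 3)) :=
  (1 / 2 : ℝ) • ((wedgeOp u + contrOp u) ∘ₗ (wedgeOp v - contrOp v)
    - (wedgeOp v - contrOp v) ∘ₗ (wedgeOp u + contrOp u))


lemma mulX {R : Type*} [Ring R] {x y z : R} (h : x*y = z) (t : R) : x*(y*t) = z*t := by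
  rw [← mul_assoc, h]

section
variable {R : Type*} [Ring R] [Algebra ℝ R]

set_option maxHeartbeats 2000000 in
lemma key (a a' b b' w h1 h2 : R) (c s pu pv : ℝ)
    (raa : a*a = 0) (rbb : b*b = 0) (ra'a' : a'*a' = 0) (rb'b' : b'*b' = 0)
    (rba : b*a = -(a*b)) (rb'a : b'*a = -(a*b')) (rba' : b*a' = -(a'*b))
    (rb'a' : b'*a' = -(a'*b'))
    (ra'a : a'*a = 1 - a*a') (rb'b : b'*b = 1 - b*b')
    (raw : a*w = -(w*a)) (ra'w : a'*w = -(w*a')) (rbw : b*w = -(w*b)) (rb'w : b'*w = -(w*b'))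
    (h1def : h1 = (1/2:ℝ) • ((a-a')*(b+b') - (b+b')*(a-a')))
    (h2def : h2 = (1/2:ℝ) • ((a+a')*(b-b') - (b-b')*(a+a')))
    (hcs : c^2 - s^2 = 1) :
    (c•(1:R) + s•h1) * ((c•(1:R) - s•h2) * ((w + pu•a + pv•b) *
      ((c•(1:R) - s•h1) * (c•(1:R) + s•h2))))
    = w + ((c^2+s^2)*pu + (2*s*c)*pv)•a + ((c^2+s^2)*pv + (2*s*c)*pu)•b := by
  have hh1 : h1 = a*b + a*b' - a'*b - a'*b' := by
    rw [h1def]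
    simp only [mul_add, add_mul, mul_sub, sub_mul, mul_neg, neg_mul, neg_neg, mul_one, one_mul,
      mul_zero, zero_mul, mul_assoc, smul_mul_assoc, mul_smul_comm,
      raa, rbb, ra'a', rb'b', rba, rb'a, rba', rb'a', ra'a, rb'b, raw, ra'w, rbw, rb'w,
      mulX raa, mulX rbb, mulX ra'a', mulX rb'b', mulX rba, mulX rb'a, mulX rba', mulX rb'a',
      mulX ra'a, mulX rb'b, mulX raw, mulX ra'w, mulX rbw, mulX rb'w]
    module
  have hh2 : h2 = a*b - a*b' + a'*b - a'*b' := by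
    rw [h2def]
    simp only [mul_add, add_mul, mul_sub, sub_mul, mul_neg, neg_mul, neg_neg, mul_one, one_mul,
      mul_zero, zero_mul, mul_assoc, smul_mul_assoc, mul_smul_comm,
      raa, rbb, ra'a', rb'b', rba, rb'a, rba', rb'a', ra'a, rb'b, raw, ra'w, rbw, rb'w,
      mulX raa, mulX rbb, mulX ra'a', mulX rb'b', mulX rba, mulX rb'a, mulX rba', mulX rb'a',
      mulX ra'a, mulX rb'b, mulX raw, mulX ra'w, mulX rbw, mulX rb'w]
    module
  set σ := c•(1:R) + s•h1 with hσ
  set τ := c•(1:R) - s•h2 with hτ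
  set σ' := c•(1:R) - s•h1 with hσ'
  set τ' := c•(1:R) + s•h2 with hτ'
  have t_a : τ * (a * τ') = c^2•a + (c*s)•b - (c*s)•b' + s^2•a' := by
    rw [hτ, hτ', hh2]
    simp only [mul_add, add_mul, mul_sub, sub_mul, mul_neg, neg_mul, neg_neg, mul_one, one_mul,
      mul_zero, zero_mul, mul_assoc, smul_mul_assoc, mul_smul_comm,
      raa, rbb, ra'a', rb'b', rba, rb'a, rba', rb'a', ra'a, rb'b, raw, ra'w, rbw, rb'w,
      mulX raa, mulX rbb, mulX ra'a', mulX rb'b', mulX rba, mulX rb'a, mulX rba', mulX rb'a',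
      mulX ra'a, mulX rb'b, mulX raw, mulX ra'w, mulX rbw, mulX rb'w]
    module
  have t_b : τ * (b * τ') = c^2•b + (c*s)•a + (c*s)•a' - s^2•b' := by
    rw [hτ, hτ', hh2]
    simp only [mul_add, add_mul, mul_sub, sub_mul, mul_neg, neg_mul, neg_neg, mul_one, one_mul,
      mul_zero, zero_mul, mul_assoc, smul_mul_assoc, mul_smul_comm,
      raa, rbb, ra'a', rb'b', rba, rb'a, rba', rb'a', ra'a, rb'b, raw, ra'w, rbw, rb'w,
      mulX raa, mulX rbb, mulX ra'a', mulX rb'b', mulX rba, mulX rb'a, mulX rba', mulX rb'a',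
      mulX ra'a, mulX rb'b, mulX raw, mulX ra'w, mulX rbw, mulX rb'w]
    module
  have t_w : τ * (w * τ') = (c^2-s^2)•w := by
    rw [hτ, hτ', hh2]
    simp only [mul_add, add_mul, mul_sub, sub_mul, mul_neg, neg_mul, neg_neg, mul_one, one_mul,
      mul_zero, zero_mul, mul_assoc, smul_mul_assoc, mul_smul_comm,
      raa, rbb, ra'a', rb'b', rba, rb'a, rba', rb'a', ra'a, rb'b, raw, ra'w, rbw, rb'w,
      mulX raa, mulX rbb, mulX ra'a', mulX rb'b', mulX rba, mulX rb'a, mulX rba', mulX rb'a',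
      mulX ra'a, mulX rb'b, mulX raw, mulX ra'w, mulX rbw, mulX rb'w]
    module
  have s_a : σ * (a * σ') = c^2•a + (c*s)•b + (c*s)•b' - s^2•a' := by
    rw [hσ, hσ', hh1]
    simp only [mul_add, add_mul, mul_sub, sub_mul, mul_neg, neg_mul, neg_neg, mul_one, one_mul,
      mul_zero, zero_mul, mul_assoc, smul_mul_assoc, mul_smul_comm,
      raa, rbb, ra'a', rb'b', rba, rb'a, rba', rb'a', ra'a, rb'b, raw, ra'w, rbw, rb'w,
      mulX raa, mulX rbb, mulX ra'a', mulX rb'b', mulX rba, mulX rb'a, mulX rba', mulX rb'a',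
      mulX ra'a, mulX rb'b, mulX raw, mulX ra'w, mulX rbw, mulX rb'w]
    module
  have s_a' : σ * (a' * σ') = c^2•a' - (c*s)•b - (c*s)•b' - s^2•a := by
    rw [hσ, hσ', hh1]
    simp only [mul_add, add_mul, mul_sub, sub_mul, mul_neg, neg_mul, neg_neg, mul_one, one_mul,
      mul_zero, zero_mul, mul_assoc, smul_mul_assoc, mul_smul_comm,
      raa, rbb, ra'a', rb'b', rba, rb'a, rba', rb'a', ra'a, rb'b, raw, ra'w, rbw, rb'w,
      mulX raa, mulX rbb, mulX ra'a', mulX rb'b', mulX rba, mulX rb'a, mulX rba', mulX rb'a',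
      mulX ra'a, mulX rb'b, mulX raw, mulX ra'w, mulX rbw, mulX rb'w]
    module
  have s_b : σ * (b * σ') = c^2•b + (c*s)•a - (c*s)•a' + s^2•b' := by
    rw [hσ, hσ', hh1]
    simp only [mul_add, add_mul, mul_sub, sub_mul, mul_neg, neg_mul, neg_neg, mul_one, one_mul,
      mul_zero, zero_mul, mul_assoc, smul_mul_assoc, mul_smul_comm,
      raa, rbb, ra'a', rb'b', rba, rb'a, rba', rb'a', ra'a, rb'b, raw, ra'w, rbw, rb'w,
      mulX raa, mulX rbb, mulX ra'a', mulX rb'b', mulX rba, mulX rb'a, mulX rba', mulX rb'a',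
      mulX ra'a, mulX rb'b, mulX raw, mulX ra'w, mulX rbw, mulX rb'w]
    module
  have s_b' : σ * (b' * σ') = c^2•b' + (c*s)•a - (c*s)•a' + s^2•b := by
    rw [hσ, hσ', hh1]
    simp only [mul_add, add_mul, mul_sub, sub_mul, mul_neg, neg_mul, neg_neg, mul_one, one_mul,
      mul_zero, zero_mul, mul_assoc, smul_mul_assoc, mul_smul_comm,
      raa, rbb, ra'a', rb'b', rba, rb'a, rba', rb'a', ra'a, rb'b, raw, ra'w, rbw, rb'w,
      mulX raa, mulX rbb, mulX ra'a', mulX rb'b', mulX rba, mulX rb'a, mulX rba', mulX rb'a',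
      mulX ra'a, mulX rb'b, mulX raw, mulX ra'w, mulX rbw, mulX rb'w]
    module
  have s_w : σ * (w * σ') = (c^2-s^2)•w := by
    rw [hσ, hσ', hh1]
    simp only [mul_add, add_mul, mul_sub, sub_mul, mul_neg, neg_mul, neg_neg, mul_one, one_mul,
      mul_zero, zero_mul, mul_assoc, smul_mul_assoc, mul_smul_comm,
      raa, rbb, ra'a', rb'b', rba, rb'a, rba', rb'a', ra'a, rb'b, raw, ra'w, rbw, rb'w,
      mulX raa, mulX rbb, mulX ra'a', mulX rb'b', mulX rba, mulX rb'a, mulX rba', mulX rb'a',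
      mulX ra'a, mulX rb'b, mulX raw, mulX ra'w, mulX rbw, mulX rb'w]
    module
  have comm' : σ' * τ' = τ' * σ' := by
    rw [hσ', hτ', hh1, hh2]
    simp only [mul_add, add_mul, mul_sub, sub_mul, mul_neg, neg_mul, neg_neg, mul_one, one_mul,
      mul_zero, zero_mul, mul_assoc, smul_mul_assoc, mul_smul_comm,
      raa, rbb, ra'a', rb'b', rba, rb'a, rba', rb'a', ra'a, rb'b, raw, ra'w, rbw, rb'w,
      mulX raa, mulX rbb, mulX ra'a', mulX rb'b', mulX rba, mulX rb'a, mulX rba', mulX rb'a',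
      mulX ra'a, mulX rb'b, mulX raw, mulX ra'w, mulX rbw, mulX rb'w]
    module
  rw [comm']
  have A : ∀ x : R, τ * (x * (τ' * σ')) = (τ * (x * τ')) * σ' := fun x => by
    simp only [mul_assoc]
  simp only [add_mul, smul_mul_assoc, mul_add, mul_smul_comm]
  rw [A a, A b, A w, t_a, t_b, t_w]
  simp only [add_mul, sub_mul, smul_mul_assoc, mul_add, mul_sub, mul_smul_comm, mul_assoc]
  rw [s_a, s_a', s_b, s_b', s_w]
  match_scalars
  · linear_combination (c^2-s^2+1) * hcs
  · linear_combination ((c^2+s^2)*pu + 2*c*s*pv) * hcs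
  · linear_combination (2*c*s*pu + (c^2+s^2)*pv) * hcs
  · ring
  · ring
end


abbrev V3 := EuclideanSpace ℝ (Fin 3)

lemma wedge_self (x : V3) : wedgeOp x * wedgeOp x = 0 := by
  refine LinearMap.ext fun z => ?_
  simp only [Module.End.mul_apply, wedgeOp, LinearMap.mulLeft_apply, LinearMap.zero_apply,
    ← mul_assoc, ExteriorAlgebra.ι_sq_zero, zero_mul]

lemma wedge_wedge (x y : V3) : wedgeOp x * wedgeOp y = -(wedgeOp y * wedgeOp x) := by
  refine LinearMap.ext fun z => ?_
  simp only [Module.End.mul_apply, wedgeOp, LinearMap.mulLeft_apply, LinearMap.neg_apply,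
    ← mul_assoc]
  rw [eq_neg_of_add_eq_zero_left (ExteriorAlgebra.ι_add_mul_swap x y), neg_mul]

lemma contr_self (x : V3) : contrOp x * contrOp x = 0 := by
  refine LinearMap.ext fun z => ?_
  simp only [Module.End.mul_apply, contrOp, LinearMap.zero_apply,
    CliffordAlgebra.contractLeft_contractLeft]

lemma contr_contr (x y : V3) : contrOp x * contrOp y = -(contrOp y * contrOp x) := by
  refine LinearMap.ext fun z => ?_
  simp only [Module.End.mul_apply, contrOp, LinearMap.neg_apply]
  exact CliffordAlgebra.contractLeft_comm (R := ℝ) (M := V3) (Q := 0) (d := innerₗ V3 x) (d' := innerₗ V3 y) z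

lemma contr_wedge (x y : V3) :
    contrOp x * wedgeOp y = (⟪x, y⟫ : ℝ) • (1 : Module.End ℝ (ExteriorAlgebra ℝ V3))
      - wedgeOp y * contrOp x := by
  refine LinearMap.ext fun z => ?_
  simp only [Module.End.mul_apply, contrOp, wedgeOp, LinearMap.mulLeft_apply,
    LinearMap.sub_apply, LinearMap.smul_apply, Module.End.one_apply,
    CliffordAlgebra.contractLeft_ι_mul]
  rfl

lemma wedgeOp_add (x y : V3) : wedgeOp (x + y) = wedgeOp x + wedgeOp y := by
  refine LinearMap.ext fun z => ?_; simp [wedgeOp, add_mul]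

lemma wedgeOp_smul (r : ℝ) (x : V3) : wedgeOp (r • x) = r • wedgeOp x := by
  refine LinearMap.ext fun z => ?_; simp [wedgeOp, smul_mul_assoc]

/-- hyperbolic rotation of points by an angle `θ` in the plane of `u` and `v`. -/
theorem hyperbolic_rotation_of_point (u v p : EuclideanSpace ℝ (Fin 3))
    (huv : ⟪u, v⟫ = 0) (hu : ‖u‖ = 1) (hv : ‖v‖ = 1) (θ : ℝ) :
    ((Real.cosh (θ / 2) • LinearMap.id + Real.sinh (θ / 2) • hypGen1 u v) ∘ₗ
          (Real.cosh (θ / 2) • LinearMap.id - Real.sinh (θ / 2) • hypGen2 u v)) ∘ₗ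
        wedgeOp p ∘ₗ
        ((Real.cosh (θ / 2) • LinearMap.id - Real.sinh (θ / 2) • hypGen1 u v) ∘ₗ
          (Real.cosh (θ / 2) • LinearMap.id + Real.sinh (θ / 2) • hypGen2 u v))
      = wedgeOp ((p - ⟪p, u⟫ • u - ⟪p, v⟫ • v)
          + (Real.cosh θ * ⟪p, u⟫ + Real.sinh θ * ⟪p, v⟫) • u
          + (Real.cosh θ * ⟪p, v⟫ + Real.sinh θ * ⟪p, u⟫) • v) := by
  have huu : (⟪u, u⟫ : ℝ) = 1 := by
    rw [real_inner_self_eq_norm_sq, hu]; norm_num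
  have hvv : (⟪v, v⟫ : ℝ) = 1 := by
    rw [real_inner_self_eq_norm_sq, hv]; norm_num
  have hvu : (⟪v, u⟫ : ℝ) = 0 := by rw [real_inner_comm]; exact huv
  have huq : (⟪u, p - ⟪p, u⟫ • u - ⟪p, v⟫ • v⟫ : ℝ) = 0 := by
    rw [inner_sub_right, inner_sub_right, real_inner_smul_right, real_inner_smul_right,
      huu, huv, real_inner_comm u p]
    ring
  have hvq : (⟪v, p - ⟪p, u⟫ • u - ⟪p, v⟫ • v⟫ : ℝ) = 0 := by
    rw [inner_sub_right, inner_sub_right, real_inner_smul_right, real_inner_smul_right,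
      hvv, hvu, real_inner_comm v p]
    ring
  have rb'a : contrOp v * wedgeOp u = -(wedgeOp u * contrOp v) := by
    rw [contr_wedge, hvu, zero_smul, zero_sub]
  have ra'b : contrOp u * wedgeOp v = -(wedgeOp v * contrOp u) := by
    rw [contr_wedge, huv, zero_smul, zero_sub]
  have rba' : wedgeOp v * contrOp u = -(contrOp u * wedgeOp v) := by
    rw [ra'b, neg_neg]
  have ra'a : contrOp u * wedgeOp u = 1 - wedgeOp u * contrOp u := by
    rw [contr_wedge, huu, one_smul]
  have rb'b : contrOp v * wedgeOp v = 1 - wedgeOp v * contrOp v := by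
    rw [contr_wedge, hvv, one_smul]
  have ra'w : contrOp u * wedgeOp (p - ⟪p, u⟫ • u - ⟪p, v⟫ • v)
      = -(wedgeOp (p - ⟪p, u⟫ • u - ⟪p, v⟫ • v) * contrOp u) := by
    rw [contr_wedge, huq, zero_smul, zero_sub]
  have rb'w : contrOp v * wedgeOp (p - ⟪p, u⟫ • u - ⟪p, v⟫ • v)
      = -(wedgeOp (p - ⟪p, u⟫ • u - ⟪p, v⟫ • v) * contrOp v) := by
    rw [contr_wedge, hvq, zero_smul, zero_sub]
  have hcs := Real.cosh_sq_sub_sinh_sq (θ/2)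
  have h2t : 2*(θ/2) = θ := by ring
  have hC : Real.cosh θ = Real.cosh (θ/2)^2 + Real.sinh (θ/2)^2 := by
    nth_rewrite 1 [← h2t]
    exact Real.cosh_two_mul _
  have hS : Real.sinh θ = 2*Real.sinh (θ/2)*Real.cosh (θ/2) := by
    nth_rewrite 1 [← h2t]
    exact Real.sinh_two_mul _
  have hp : wedgeOp p = wedgeOp (p - ⟪p, u⟫ • u - ⟪p, v⟫ • v)
      + ⟪p, u⟫ • wedgeOp u + ⟪p, v⟫ • wedgeOp v := by
    rw [← wedgeOp_smul, ← wedgeOp_smul, ← wedgeOp_add, ← wedgeOp_add]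
    congr 1
    module
  have main := key (wedgeOp u) (contrOp u) (wedgeOp v) (contrOp v)
    (wedgeOp (p - ⟪p, u⟫ • u - ⟪p, v⟫ • v)) (hypGen1 u v) (hypGen2 u v)
    (Real.cosh (θ/2)) (Real.sinh (θ/2)) ⟪p, u⟫ ⟪p, v⟫
    (wedge_self u) (wedge_self v) (contr_self u) (contr_self v)
    (wedge_wedge v u) rb'a rba' (contr_contr v u) ra'a rb'b
    (wedge_wedge u _) ra'w (wedge_wedge v _) rb'w rfl rfl hcs
  rw [← mul_assoc] at main
  rw [hp, hC, hS, wedgeOp_add, wedgeOp_add, wedgeOp_smul, wedgeOp_smul]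
  exact main

end
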